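/- Vanna of the barrier-pricing parameter 𝒜: fix K > 0, T > 0, r_d, r_f ∈ ℝ and φ ∈ {1, −1}. For S > 0, σ > 0 let 𝒜(S, σ) = φ(S e^{-r_f T} N(φx₁) − K e^{-r_d T} N(φ(x₁ − σ√T))) with x₁ = ln(S/K)/(σ√T) + (1+α)σ√T and α = (r_d − r_f − σ²/2)/σ². Then the mixed second partial derivative ∂²𝒜/∂S∂σ (the σ-derivative of the Delta ∂𝒜/∂S) exists at every (S, σ) with S, σ > 0 and equals ((S/K)^{−r_d/σ² + r_f/σ² − 1/2}/(2√(2π) σ² √T)) · (T(−2r_d + 2r_f + σ²) − 2 ln(S/K)) · exp(−(4 ln²(S/K) + T²(4r_d² + r_d(4σ² − 8r_f) + (2r_f + σ²)²))/(8σ²T)). -/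

import Mathlib

/-
The Delta of `𝒜` is `φ e^{-r_f T} N(φ x₁)`: the two terms produced by differentiating the
arguments of `N` cancel because of the classical identity
`S e^{-r_f T} N'(x₁) = K e^{-r_d T} N'(x₁ - σ√T)`, which follows from
`N'(a - b) = N'(a) e^{ab - b²/2}` and `x₁ σ√T - σ²T/2 = ln(S/K) + (r_d - r_f) T`.
Differentiating the Delta in `σ` then only hits `x₁`, whose `σ`-derivative is
`(T(σ² - 2r_d + 2r_f) - 2 ln(S/K)) / (2σ²√T)`, and `e^{-r_f T} N'(x₁)` is rewritten as the stated
power of `S/K` times a Gaussian factor.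
-/

noncomputable def stdNormalCdf (z : ℝ) : ℝ :=
  ∫ x in Set.Iic z, (1 / Real.sqrt (2 * Real.pi)) * Real.exp (-x ^ 2 / 2)

open Real Filter Topology MeasureTheory

theorem hasDerivAt_integral_Iic {E : Type*} [NormedAddCommGroup E] [NormedSpace ℝ E]
    [CompleteSpace E] {f : ℝ → E} (hf : Continuous f) (hfi : Integrable f) (z : ℝ) :
    HasDerivAt (fun y => ∫ x in Set.Iic y, f x) (f z) z := by
  have hsplit : (fun y => ∫ x in Set.Iic y, f x) =
      fun y => (∫ x in Set.Iic 0, f x) + ∫ x in (0 : ℝ)..y, f x := by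
    funext y
    rw [← intervalIntegral.integral_Iic_sub_Iic hfi.integrableOn hfi.integrableOn,
      add_sub_cancel]
  rw [hsplit]
  exact (intervalIntegral.integral_hasDerivAt_right (hf.intervalIntegrable _ _)
    hf.aestronglyMeasurable.stronglyMeasurableAtFilter hf.continuousAt).const_add _

noncomputable def stdNormalPdf (x : ℝ) : ℝ := 1 / √(2 * π) * exp (-x ^ 2 / 2)

theorem continuous_stdNormalPdf : Continuous stdNormalPdf := by
  unfold stdNormalPdf
  fun_prop

theorem integrable_stdNormalPdf : Integrable stdNormalPdf := by
  refine ((integrable_exp_neg_mul_sq (by norm_num : (0 : ℝ) < 1 / 2)).const_mul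
    (1 / √(2 * π))).congr (Eventually.of_forall fun x => ?_)
  simp only [stdNormalPdf]
  ring_nf

theorem hasDerivAt_stdNormalCdf (z : ℝ) : HasDerivAt stdNormalCdf (stdNormalPdf z) z :=
  hasDerivAt_integral_Iic continuous_stdNormalPdf integrable_stdNormalPdf z

theorem stdNormalPdf_mul_of_sq_eq_one {φ : ℝ} (hφ : φ ^ 2 = 1) (x : ℝ) :
    stdNormalPdf (φ * x) = stdNormalPdf x := by
  simp only [stdNormalPdf, mul_pow, hφ, one_mul]

theorem stdNormalPdf_sub (a b : ℝ) :
    stdNormalPdf (a - b) = stdNormalPdf a * exp (a * b - b ^ 2 / 2) := by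
  simp only [stdNormalPdf, mul_assoc, ← exp_add]
  ring_nf

noncomputable def x₁ (K T rd rf s v : ℝ) : ℝ :=
  log (s / K) / (v * √T) + (1 + (rd - rf - v ^ 2 / 2) / v ^ 2) * (v * √T)

noncomputable def barrierA (φ K T rd rf s v : ℝ) : ℝ :=
  φ * (s * exp (-rf * T) * stdNormalCdf (φ * x₁ K T rd rf s v) -
    K * exp (-rd * T) * stdNormalCdf (φ * (x₁ K T rd rf s v - v * √T)))

theorem x₁_mul_sub_sq_div_two {K T rd rf v : ℝ} (s : ℝ) (hT : 0 < T) (hv : v ≠ 0) :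
    x₁ K T rd rf s v * (v * √T) - (v * √T) ^ 2 / 2 = log (s / K) + (rd - rf) * T := by
  obtain ⟨t, ht, rfl⟩ : ∃ t, 0 < t ∧ T = t ^ 2 := ⟨√T, sqrt_pos.2 hT, (sq_sqrt hT.le).symm⟩
  rw [x₁, sqrt_sq ht.le]
  field_simp
  ring

theorem spot_mul_stdNormalPdf_x₁ {K T rd rf s v : ℝ} (hK : 0 < K) (hT : 0 < T) (hs : 0 < s)
    (hv : v ≠ 0) :
    s * exp (-rf * T) * stdNormalPdf (x₁ K T rd rf s v) =
      K * exp (-rd * T) * stdNormalPdf (x₁ K T rd rf s v - v * √T) := by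
  rw [stdNormalPdf_sub, x₁_mul_sub_sq_div_two s hT hv, exp_add, exp_log (div_pos hs hK),
    show exp (-rf * T) = exp (-rd * T) * exp ((rd - rf) * T) by rw [← exp_add]; ring_nf]
  field_simp

theorem hasDerivAt_barrierA_spot {φ K T rd rf S v : ℝ} (hφ : φ ^ 2 = 1) (hK : 0 < K)
    (hT : 0 < T) (hS : 0 < S) (hv : v ≠ 0) :
    HasDerivAt (fun s => barrierA φ K T rd rf s v)
      (φ * exp (-rf * T) * stdNormalCdf (φ * x₁ K T rd rf S v)) S := by
  obtain ⟨d, hx⟩ : ∃ d, HasDerivAt (fun s => x₁ K T rd rf s v) d S :=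
    ⟨_, ((((hasDerivAt_id S).div_const K).log (div_pos hS hK).ne').div_const _).add_const _⟩
  have h := ((((hasDerivAt_id S).mul_const (exp (-rf * T))).mul
    ((hasDerivAt_stdNormalCdf _).comp S (hx.const_mul φ))).sub
    (((hasDerivAt_stdNormalCdf _).comp S ((hx.sub_const (v * √T)).const_mul φ)).const_mul
      (K * exp (-rd * T)))).const_mul φ
  refine h.congr_deriv ?_
  simp only [Function.comp_apply, id_eq, stdNormalPdf_mul_of_sq_eq_one hφ]
  linear_combination (φ ^ 2 * d) * spot_mul_stdNormalPdf_x₁ (rd := rd) (rf := rf) hK hT hS hv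

theorem hasDerivAt_x₁_vol {K T rd rf S σ : ℝ} (hT : 0 < T) (hσ : σ ≠ 0) :
    HasDerivAt (fun v => x₁ K T rd rf S v)
      ((T * (-2 * rd + 2 * rf + σ ^ 2) - 2 * log (S / K)) / (2 * σ ^ 2 * √T)) σ := by
  obtain ⟨t, ht, rfl⟩ : ∃ t, 0 < t ∧ T = t ^ 2 := ⟨√T, sqrt_pos.2 hT, (sq_sqrt hT.le).symm⟩
  have hb : HasDerivAt (fun v => v * √(t ^ 2)) √(t ^ 2) σ := by
    simpa using (hasDerivAt_id σ).mul_const √(t ^ 2)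
  have h := ((hasDerivAt_const σ (log (S / K))).div hb (by positivity)).add
    (((((hasDerivAt_pow 2 σ).div_const 2).const_sub (rd - rf)).div (hasDerivAt_pow 2 σ)
      (by positivity)).const_add 1 |>.mul hb)
  refine h.congr_deriv ?_
  simp only [Pi.div_apply, sqrt_sq ht.le]
  field_simp
  ring

theorem exp_mul_stdNormalPdf_x₁ {K T rd rf S σ : ℝ} (hK : 0 < K) (hT : 0 < T) (hS : 0 < S)
    (hσ : σ ≠ 0) :
    exp (-rf * T) * stdNormalPdf (x₁ K T rd rf S σ) =
      (S / K) ^ (-rd / σ ^ 2 + rf / σ ^ 2 - 1 / 2) *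
        exp (-(4 * log (S / K) ^ 2 +
          T ^ 2 * (4 * rd ^ 2 + rd * (4 * σ ^ 2 - 8 * rf) + (2 * rf + σ ^ 2) ^ 2)) /
          (8 * σ ^ 2 * T)) / √(2 * π) := by
  obtain ⟨t, ht, rfl⟩ : ∃ t, 0 < t ∧ T = t ^ 2 := ⟨√T, sqrt_pos.2 hT, (sq_sqrt hT.le).symm⟩
  rw [stdNormalPdf, x₁, sqrt_sq ht.le, rpow_def_of_pos (div_pos hS hK)]
  rw [mul_left_comm, ← exp_add, ← exp_add, one_div_mul_eq_div]
  congr 2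
  field_simp
  ring

/-- Vanna of the barrier-pricing parameter `𝒜`: the σ-derivative of the Delta
`∂𝒜/∂S` exists and is given by the stated closed formula. -/
theorem vanna_A (K T rd rf φ : ℝ) (hK : 0 < K) (hT : 0 < T)
    (hφ : φ = 1 ∨ φ = -1) (S σ : ℝ) (hS : 0 < S) (hσ : 0 < σ) :
    HasDerivAt (fun v : ℝ =>
        deriv (fun s : ℝ =>
          φ * (s * Real.exp (-rf * T) *
              stdNormalCdf (φ * (Real.log (s / K) / (v * Real.sqrt T) +
                (1 + (rd - rf - v ^ 2 / 2) / v ^ 2) * (v * Real.sqrt T))) -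
            K * Real.exp (-rd * T) *
              stdNormalCdf (φ * (Real.log (s / K) / (v * Real.sqrt T) +
                (1 + (rd - rf - v ^ 2 / 2) / v ^ 2) * (v * Real.sqrt T) - v * Real.sqrt T)))) S)
      ((S / K) ^ (-rd / σ ^ 2 + rf / σ ^ 2 - 1 / 2) /
          (2 * Real.sqrt (2 * Real.pi) * σ ^ 2 * Real.sqrt T) *
        (T * (-2 * rd + 2 * rf + σ ^ 2) - 2 * Real.log (S / K)) *
        Real.exp (-(4 * Real.log (S / K) ^ 2 +
            T ^ 2 * (4 * rd ^ 2 + rd * (4 * σ ^ 2 - 8 * rf) + (2 * rf + σ ^ 2) ^ 2)) /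
          (8 * σ ^ 2 * T))) σ := by
  have hφ2 : φ ^ 2 = 1 := by rcases hφ with rfl | rfl <;> norm_num
  have hdelta : (fun v => deriv (fun s => barrierA φ K T rd rf s v) S) =ᶠ[𝓝 σ]
      fun v => φ * exp (-rf * T) * stdNormalCdf (φ * x₁ K T rd rf S v) :=
    (eventually_ne_nhds hσ.ne').mono fun v hv =>
      (hasDerivAt_barrierA_spot hφ2 hK hT hS hv).deriv
  have hvanna := (((hasDerivAt_stdNormalCdf _).comp σ
    ((hasDerivAt_x₁_vol hT hσ.ne').const_mul φ)).const_mul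
    (φ * exp (-rf * T))).congr_of_eventuallyEq hdelta
  refine hvanna.congr_deriv ?_
  have hregroup (e n d : ℝ) : φ * e * (n * (φ * d)) = φ ^ 2 * (e * n) * d := by ring
  rw [stdNormalPdf_mul_of_sq_eq_one hφ2, hregroup, hφ2, exp_mul_stdNormalPdf_x₁ hK hT hS hσ.ne']
  ring
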